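/- For all integers k ≥ 2 and s ≥ 1, there exists a finite simple graph H with chromatic number at most k that has the k-extension property and is s-connected. -/

import Mathlib

/-- A graph `G` has the `k`-extension property if for every two disjoint finite sets
`X`, `Y` of vertices with `|X ∪ Y| < k` there is a vertex `z ∉ X ∪ Y` adjacent to
every vertex of `X` and to no vertex of `Y`. -/
def HasExtensionProperty {V : Type} (G : SimpleGraph V) (k : ℕ) : Prop :=
  ∀ X Y : Finset V, Disjoint X Y → X.card + Y.card < k →
    ∃ z : V, z ∉ X ∧ z ∉ Y ∧ (∀ x ∈ X, G.Adj z x) ∧ (∀ y ∈ Y, ¬ G.Adj z y)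

/-- A finite graph is `s`-connected if it has more than `s` vertices and removing any
set of fewer than `s` vertices leaves a connected induced subgraph. -/
def IsSConnected {V : Type} [Fintype V] (H : SimpleGraph V) (s : ℕ) : Prop :=
  s < Fintype.card V ∧ ∀ S : Set V, S.ncard < s → (H.induce Sᶜ).Connected

/-!
Split the vertices into `k` parts of size `m` and, for each pair of vertices in different parts,
decide by a function `f : Sym2 V → Bool` whether to join them. A *request* consists of a part `c`,
disjoint sets `X`, `Y` of at most `r` vertices outside `c` and a set `F` of at most `t` vertices;
it is met when some vertex of `c` outside `F` is joined to all of `X` and to none of `Y`. A single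
request fails for at most a fraction `(1 - 2⁻ʳ) ^ (m - t)` of all `f`, while the number of
requests grows only polynomially in `m`, so for large `m` some `f` meets every request.

For `r = k` this gives the `k`-extension property, since `X ∪ Y` misses some part. Taking `F` to
be a deleted vertex set, two surviving vertices of one part have a common neighbour in another
part, and a vertex `v` has a neighbour in the part of any other vertex `u`; hence the rest stays
connected. The parts form a proper `k`-colouring.
-/

open Finset Function Filter

theorem Fintype.card_subtype_comp_injective {A B γ : Type*} [Fintype A] [DecidableEq A]
    [Fintype B] [DecidableEq B] [Fintype γ] {ι : A → B} (hι : Injective ι)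
    (P : (A → γ) → Prop) [DecidablePred P] :
    Fintype.card {f : B → γ // P (f ∘ ι)} =
      Fintype.card {g : A → γ // P g} * Fintype.card γ ^ (Fintype.card B - Fintype.card A) := by
  let e : (B → γ) ≃ (A → γ) × ({b // b ∉ Set.range ι} → γ) :=
    (Equiv.piEquivPiSubtypeProd (· ∈ Set.range ι) fun _ ↦ γ).trans
      (Equiv.prodCongr (Equiv.arrowCongr (Equiv.ofInjective ι hι).symm (Equiv.refl γ))
        (Equiv.refl _))
  have he : ∀ f, (e f).1 = f ∘ ι := fun f ↦ rfl
  rw [Fintype.card_congr ((e.subtypeEquiv fun f ↦ by rw [he]).trans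
    Equiv.prodSubtypeFstEquivSubtypeProd), Fintype.card_prod, Fintype.card_fun,
    Fintype.card_subtype_compl, Set.card_range_of_injective hι]

theorem card_fun_forall_exists_ne {W T : Type*} [Fintype W] [DecidableEq W] [Fintype T]
    [DecidableEq T] (b : T → Bool) :
    Fintype.card {g : W × T → Bool // ∀ w, ∃ t, g (w, t) ≠ b t} =
      (2 ^ Fintype.card T - 1) ^ Fintype.card W := by
  let e : {g : W × T → Bool // ∀ w, ∃ t, g (w, t) ≠ b t} ≃ (W → {h : T → Bool // h ≠ b}) :=
    ((Equiv.curry W T Bool).subtypeEquiv fun g ↦ by simp [Function.ne_iff]).trans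
      Equiv.subtypePiEquivPi
  rw [Fintype.card_congr e, Fintype.card_fun, Fintype.card_subtype_compl, Fintype.card_fun,
    Fintype.card_bool, Fintype.card_subtype_eq]

theorem card_sym2_fun_forall_exists_ne {α : Type*} [Fintype α] [DecidableEq α] {W T : Finset α}
    (hWT : Disjoint W T) (b : α → Bool) :
    (#{f : Sym2 α → Bool | ∀ w ∈ W, ∃ t ∈ T, f s(w, t) ≠ b t} : ℝ) =
      2 ^ Fintype.card (Sym2 α) * (1 - 2⁻¹ ^ #T) ^ #W := by
  let ι : W × T → Sym2 α := fun p ↦ s(p.1, p.2)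
  have hι : Injective ι := by
    rintro ⟨w, t⟩ ⟨w', t'⟩ h
    rcases Sym2.eq_iff.mp h with ⟨h₁, h₂⟩ | ⟨h₁, -⟩
    · exact Prod.ext (Subtype.ext h₁) (Subtype.ext h₂)
    · have hwt : (w : α) = t' := h₁
      exact (disjoint_left.mp hWT w.2 (hwt ▸ t'.2)).elim
  have hcount := Fintype.card_subtype_comp_injective hι fun g ↦ ∀ w, ∃ t, g (w, t) ≠ b t
  rw [card_fun_forall_exists_ne (fun t : T ↦ b t), Fintype.card_prod, Fintype.card_coe,
    Fintype.card_coe, Fintype.card_bool] at hcount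
  have hle : #W * #T ≤ Fintype.card (Sym2 α) := by
    simpa using Fintype.card_le_of_injective ι hι
  have hcard : #{f : Sym2 α → Bool | ∀ w ∈ W, ∃ t ∈ T, f s(w, t) ≠ b t} =
      Fintype.card {f : Sym2 α → Bool // ∀ w : W, ∃ t : T, (f ∘ ι) (w, t) ≠ b t} := by
    rw [← Fintype.card_subtype]
    exact Fintype.card_congr (Equiv.subtypeEquivRight fun f ↦ by simp [ι])
  rw [hcard, hcount]
  push_cast [Nat.one_le_two_pow]
  have hbase : (1 - 2⁻¹ ^ #T : ℝ) = (2 ^ #T - 1) / 2 ^ #T := by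
    rw [sub_div, div_self (by positivity), inv_pow, one_div]
  rw [pow_sub₀ _ two_ne_zero hle, hbase, div_pow, pow_mul']
  ring

theorem card_finsets_card_le_le (α : Type*) [Fintype α] [DecidableEq α] (r : ℕ) :
    #{X : Finset α | #X ≤ r} ≤ (r + 1) * (Fintype.card α + 1) ^ r := by
  calc #{X : Finset α | #X ≤ r}
      ≤ #((range (r + 1)).biUnion fun j ↦ powersetCard j (univ : Finset α)) := by
        refine card_le_card fun X hX ↦ ?_
        simp only [mem_filter, mem_univ, true_and] at hX
        simpa [Nat.lt_succ_iff] using hX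
    _ ≤ ∑ j ∈ range (r + 1), #(powersetCard j (univ : Finset α)) := card_biUnion_le
    _ = ∑ j ∈ range (r + 1), (Fintype.card α).choose j := by simp
    _ ≤ ∑ _j ∈ range (r + 1), (Fintype.card α + 1) ^ r := by
        refine sum_le_sum fun j hj ↦ ?_
        calc (Fintype.card α).choose j ≤ Fintype.card α ^ j := Nat.choose_le_pow _ _
          _ ≤ (Fintype.card α + 1) ^ j := Nat.pow_le_pow_left (Nat.le_succ _) _
          _ ≤ (Fintype.card α + 1) ^ r :=
            Nat.pow_le_pow_right (Nat.succ_pos _) (Nat.lt_succ_iff.mp (mem_range.mp hj))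
    _ = (r + 1) * (Fintype.card α + 1) ^ r := by simp

theorem eventually_mul_pow_mul_pow_sub_lt_one (C : ℝ) (a d t : ℕ) {ρ : ℝ} (hρ₀ : 0 ≤ ρ)
    (hρ₁ : ρ < 1) : ∀ᶠ m : ℕ in atTop, C * ((a * m + 1 : ℝ)) ^ d * ρ ^ (m - t) < 1 := by
  rcases hρ₀.eq_or_lt with rfl | hρ₀
  · filter_upwards [eventually_gt_atTop t] with m hm
    simp [zero_pow (Nat.sub_ne_zero_of_lt hm)]
  have hlim := (tendsto_pow_const_mul_const_pow_of_lt_one d hρ₀.le hρ₁).const_mul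
    (|C| * (a + 1) ^ d / ρ ^ t)
  rw [mul_zero] at hlim
  filter_upwards [hlim.eventually (gt_mem_nhds one_pos), eventually_ge_atTop (max t 1)]
    with m hlt hm
  have hmt : t ≤ m := le_of_max_le_left hm
  have hm1 : (1 : ℝ) ≤ m := by exact_mod_cast le_of_max_le_right hm
  calc C * ((a * m + 1 : ℝ)) ^ d * ρ ^ (m - t)
      ≤ |C| * ((a + 1) * m) ^ d * (ρ ^ m / ρ ^ t) := by
        rw [pow_sub₀ _ hρ₀.ne' hmt, div_eq_mul_inv]
        gcongr
        · exact le_abs_self C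
        · nlinarith
    _ = |C| * (a + 1) ^ d / ρ ^ t * (m ^ d * ρ ^ m) := by rw [mul_pow]; ring
    _ < 1 := hlt

def partiteGraph {V ι : Type} (π : V → ι) (f : Sym2 V → Bool) : SimpleGraph V where
  Adj u v := π u ≠ π v ∧ f s(u, v)
  symm := ⟨fun u v h ↦ ⟨h.1.symm, by rw [Sym2.eq_swap]; exact h.2⟩⟩

@[simp]
theorem partiteGraph_adj {V ι : Type} {π : V → ι} {f : Sym2 V → Bool} {u v : V} :
    (partiteGraph π f).Adj u v ↔ π u ≠ π v ∧ f s(u, v) :=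
  Iff.rfl

theorem partiteGraph_chromaticNumber_le {V ι : Type} [Fintype ι] (π : V → ι)
    (f : Sym2 V → Bool) : (partiteGraph π f).chromaticNumber ≤ Fintype.card ι :=
  (SimpleGraph.Coloring.mk (G := partiteGraph π f) π fun h ↦ h.1).colorable.chromaticNumber_le

def HasPartiteExtensionProperty {V ι : Type} (G : SimpleGraph V) (π : V → ι) (r t : ℕ) :
    Prop :=
  ∀ (c : ι) (X Y F : Finset V), (∀ x ∈ X, π x ≠ c) → (∀ y ∈ Y, π y ≠ c) → Disjoint X Y →
    #X + #Y ≤ r → #F ≤ t →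
      ∃ z, π z = c ∧ z ∉ F ∧ (∀ x ∈ X, G.Adj z x) ∧ ∀ y ∈ Y, ¬ G.Adj z y

namespace HasPartiteExtensionProperty

variable {V ι : Type} {G : SimpleGraph V} {π : V → ι} {r t : ℕ}

theorem hasExtensionProperty [Fintype ι] (h : HasPartiteExtensionProperty G π r t)
    (hr : Fintype.card ι ≤ r + 1) : HasExtensionProperty G (Fintype.card ι) := by
  classical
  intro X Y hXY hcard
  obtain ⟨c, -, hc⟩ := exists_mem_notMem_of_card_lt_card (s := (X ∪ Y).image π) (t := univ)
    (by rw [card_univ]; exact card_image_le.trans_lt ((card_union_le X Y).trans_lt hcard))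
  have hX : ∀ x ∈ X, π x ≠ c := fun x hx hxc ↦ hc (hxc ▸ mem_image_of_mem π (mem_union_left Y hx))
  have hY : ∀ y ∈ Y, π y ≠ c := fun y hy hyc ↦ hc (hyc ▸ mem_image_of_mem π (mem_union_right X hy))
  obtain ⟨z, hzc, -, hzX, hzY⟩ := h c X Y ∅ hX hY hXY (by omega) (by simp)
  exact ⟨z, fun hz ↦ hX z hz hzc, fun hz ↦ hY z hz hzc, hzX, hzY⟩

theorem connected_induce_compl [Nontrivial ι] (h : HasPartiteExtensionProperty G π r t)
    (hr : 2 ≤ r) {F : Finset V} (hF : #F ≤ t) : (G.induce (F : Set V)ᶜ).Connected := by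
  classical
  set H := G.induce (F : Set V)ᶜ
  have reachable_of_adj {u v : V} (hu : u ∉ F) (hv : v ∉ F) (huv : G.Adj u v) :
      H.Reachable ⟨u, hu⟩ ⟨v, hv⟩ :=
    (SimpleGraph.induce_adj.mpr huv).reachable
  have reachable_of_eq (u v : ((F : Set V)ᶜ : Set V)) (huv : π u = π v) : H.Reachable u v := by
    obtain ⟨d, hd⟩ := exists_ne (π u)
    obtain ⟨z, -, hzF, hz, -⟩ := h d {(u : V), (v : V)} ∅ F (by simp [hd.symm, huv ▸ hd.symm])
      (by simp) (disjoint_empty_right _) (by simpa using card_le_two.trans hr) hF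
    exact (reachable_of_adj u.2 hzF (hz u (by simp)).symm).trans
      (reachable_of_adj hzF v.2 (hz v (by simp)))
  obtain ⟨z, -, hz, -⟩ := h (Classical.arbitrary ι) ∅ ∅ F (by simp) (by simp)
    (disjoint_empty_left ∅) (by simp) hF
  have : Nonempty ((F : Set V)ᶜ : Set V) := ⟨⟨z, hz⟩⟩
  refine ⟨fun u v ↦ ?_⟩
  by_cases huv : π u = π v
  · exact reachable_of_eq u v huv
  obtain ⟨w, hwu, hwF, hw, -⟩ := h (π u) {(v : V)} ∅ F (by simpa [eq_comm] using huv)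
    (by simp) (disjoint_empty_right _) (by simpa using one_le_two.trans hr) hF
  exact (reachable_of_eq u ⟨w, hwF⟩ hwu.symm).trans (reachable_of_adj hwF v.2 (hw v (by simp)))

theorem isSConnected [Fintype V] [Nontrivial ι] {s : ℕ}
    (h : HasPartiteExtensionProperty G π r s) (hr : 2 ≤ r) : IsSConnected G s := by
  refine ⟨?_, fun S hS ↦ ?_⟩
  · by_contra! hV
    obtain ⟨z, -, hz, -⟩ := h (Classical.arbitrary ι) ∅ ∅ univ (by simp) (by simp)
      (disjoint_empty_left ∅) (by simp) (by simpa using hV)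
    exact hz (mem_univ z)
  · have hS' : #S.toFinite.toFinset ≤ s := (Set.ncard_eq_toFinset_card S).symm.trans_le hS.le
    have := h.connected_induce_compl hr hS'
    rwa [Set.Finite.coe_toFinset] at this

end HasPartiteExtensionProperty

section Requests

variable {V ι : Type} [Fintype V] [DecidableEq V] [Fintype ι] [DecidableEq ι] (π : V → ι)

/-- A request `(c, X, Y, F)` asks for a vertex of part `c`, outside `F`, joined to every vertex
of `X` and to no vertex of `Y`. -/
def extensionRequests (r t : ℕ) : Finset (ι × Finset V × Finset V × Finset V) :=
  {τ | (∀ x ∈ τ.2.1, π x ≠ τ.1) ∧ (∀ y ∈ τ.2.2.1, π y ≠ τ.1) ∧ Disjoint τ.2.1 τ.2.2.1 ∧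
    #τ.2.1 + #τ.2.2.1 ≤ r ∧ #τ.2.2.2 ≤ t}

def requestFailures (τ : ι × Finset V × Finset V × Finset V) : Finset (Sym2 V → Bool) :=
  {f | ∀ w ∈ ({v | π v = τ.1} : Finset V) \ τ.2.2.2, ∃ u ∈ τ.2.1 ∪ τ.2.2.1,
    f s(w, u) ≠ decide (u ∈ τ.2.1)}

variable {π}

theorem card_extensionRequests_le (r t : ℕ) :
    #(extensionRequests π r t) ≤
      Fintype.card ι * (r + 1) ^ 2 * (t + 1) * (Fintype.card V + 1) ^ (2 * r + t) := by
  have hsub : extensionRequests π r t ⊆ (univ : Finset ι) ×ˢ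
      (({X | #X ≤ r} : Finset (Finset V)) ×ˢ
        (({Y | #Y ≤ r} : Finset (Finset V)) ×ˢ ({F | #F ≤ t} : Finset (Finset V)))) := by
    rintro ⟨c, X, Y, F⟩ hτ
    obtain ⟨-, -, -, -, hr, ht⟩ := mem_filter.mp hτ
    simp only [mem_product, mem_univ, mem_filter, true_and] at hr ht ⊢
    omega
  calc #(extensionRequests π r t) ≤ Fintype.card ι * (#{X : Finset V | #X ≤ r} *
        (#{Y : Finset V | #Y ≤ r} * #{F : Finset V | #F ≤ t})) := by
        simpa only [card_product, card_univ] using card_le_card hsub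
    _ ≤ Fintype.card ι * ((r + 1) * (Fintype.card V + 1) ^ r *
        ((r + 1) * (Fintype.card V + 1) ^ r * ((t + 1) * (Fintype.card V + 1) ^ t))) := by
        gcongr <;> exact card_finsets_card_le_le V _
    _ = _ := by ring

theorem card_requestFailures_le {m r t : ℕ} (hπ : ∀ c, m ≤ #{v | π v = c})
    {τ : ι × Finset V × Finset V × Finset V} (hτ : τ ∈ extensionRequests π r t) :
    (#(requestFailures π τ) : ℝ) ≤ 2 ^ Fintype.card (Sym2 V) * (1 - 2⁻¹ ^ r) ^ (m - t) := by
  obtain ⟨c, X, Y, F⟩ := τ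
  obtain ⟨-, hX, hY, -, hr, ht⟩ := mem_filter.mp hτ
  have hdisj : Disjoint (({v | π v = c} : Finset V) \ F) (X ∪ Y) := by
    refine disjoint_left.mpr fun w hw hwXY ↦ ?_
    obtain ⟨hwc, -⟩ : π w = c ∧ w ∉ F := by simpa using hw
    rcases mem_union.mp hwXY with hwX | hwY
    exacts [hX w hwX hwc, hY w hwY hwc]
  have hW : m - t ≤ #(({v | π v = c} : Finset V) \ F) :=
    (tsub_le_tsub (hπ c) ht).trans (le_card_sdiff F _)
  have hρ₀ (n : ℕ) : (0 : ℝ) ≤ 1 - 2⁻¹ ^ n :=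
    sub_nonneg.mpr (pow_le_one₀ (by norm_num) (by norm_num))
  rw [requestFailures, card_sym2_fun_forall_exists_ne hdisj]
  gcongr 2 ^ _ * ?_
  calc (1 - 2⁻¹ ^ #(X ∪ Y) : ℝ) ^ #(({v | π v = c} : Finset V) \ F)
      ≤ (1 - 2⁻¹ ^ r) ^ #(({v | π v = c} : Finset V) \ F) :=
        pow_le_pow_left₀ (hρ₀ _) (sub_le_sub_left (pow_le_pow_of_le_one (by norm_num)
          (by norm_num) ((card_union_le X Y).trans hr)) 1) _
    _ ≤ (1 - 2⁻¹ ^ r) ^ (m - t) :=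
        pow_le_pow_of_le_one (hρ₀ r) (sub_le_self 1 (by positivity)) hW

theorem hasPartiteExtensionProperty_partiteGraph {r t : ℕ} {f : Sym2 V → Bool}
    (hf : ∀ τ ∈ extensionRequests π r t, f ∉ requestFailures π τ) :
    HasPartiteExtensionProperty (partiteGraph π f) π r t := by
  intro c X Y F hX hY hXY hr ht
  have := hf (c, X, Y, F) (mem_filter.mpr ⟨mem_univ _, hX, hY, hXY, hr, ht⟩)
  simp only [requestFailures, mem_filter, mem_univ, true_and] at this
  push Not at this
  obtain ⟨z, hz, hzXY⟩ := this
  obtain ⟨hzc, hzF⟩ : π z = c ∧ z ∉ F := by simpa using hz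
  refine ⟨z, hzc, hzF, fun x hx ↦ ?_, fun y hy ↦ ?_⟩
  · simpa [hzc, (hX x hx).symm, hx] using hzXY x (mem_union_left Y hx)
  · simp [disjoint_right.mp hXY hy, hzXY y (mem_union_right X hy)]

end Requests

theorem eventually_exists_hasPartiteExtensionProperty (ι : Type) [Fintype ι] [DecidableEq ι]
    (r t : ℕ) : ∀ᶠ m in atTop, ∀ {V : Type} [Fintype V] [DecidableEq V] (π : V → ι),
      (∀ c, #{v | π v = c} = m) → ∃ f, HasPartiteExtensionProperty (partiteGraph π f) π r t := by
  have hρ₀ : (0 : ℝ) ≤ 1 - 2⁻¹ ^ r := sub_nonneg.mpr (pow_le_one₀ (by norm_num) (by norm_num))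
  have hρ₁ : (1 - 2⁻¹ ^ r : ℝ) < 1 := sub_lt_self 1 (by positivity)
  filter_upwards [eventually_mul_pow_mul_pow_sub_lt_one
    (Fintype.card ι * (r + 1) ^ 2 * (t + 1)) (Fintype.card ι) (2 * r + t) t hρ₀ hρ₁]
    with m hm V _ _ π hπ
  have hV : Fintype.card V = Fintype.card ι * m := by
    rw [← card_univ, card_eq_sum_card_fiberwise (f := π) (t := univ) fun _ _ ↦ mem_univ _]
    simp [hπ]
  have hrequests : (#(extensionRequests π r t) : ℝ) ≤ Fintype.card ι * (r + 1) ^ 2 * (t + 1) *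
      (Fintype.card ι * m + 1) ^ (2 * r + t) := by
    have := card_extensionRequests_le (π := π) r t
    rw [hV] at this
    exact_mod_cast this
  have hfailures : (#((extensionRequests π r t).biUnion (requestFailures π)) : ℝ) <
      #(univ : Finset (Sym2 V → Bool)) :=
    calc (#((extensionRequests π r t).biUnion (requestFailures π)) : ℝ)
        ≤ ∑ τ ∈ extensionRequests π r t, (#(requestFailures π τ) : ℝ) := by
          exact_mod_cast card_biUnion_le
      _ ≤ #(extensionRequests π r t) * (2 ^ Fintype.card (Sym2 V) * (1 - 2⁻¹ ^ r) ^ (m - t)) := by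
          simpa using sum_le_sum fun τ hτ ↦ card_requestFailures_le (fun c ↦ (hπ c).ge) hτ
      _ = #(extensionRequests π r t) * (1 - 2⁻¹ ^ r) ^ (m - t) * 2 ^ Fintype.card (Sym2 V) := by
          ring
      _ < 1 * 2 ^ Fintype.card (Sym2 V) := by
          gcongr
          exact lt_of_le_of_lt (by gcongr) hm
      _ = #(univ : Finset (Sym2 V → Bool)) := by simp
  obtain ⟨f, -, hf⟩ := exists_mem_notMem_of_card_lt_card (by exact_mod_cast hfailures)
  exact ⟨f, hasPartiteExtensionProperty_partiteGraph fun τ hτ hfτ ↦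
    hf (mem_biUnion.mpr ⟨τ, hτ, hfτ⟩)⟩

theorem card_filter_fst_finProdFinEquiv_symm_eq {k m : ℕ} (c : Fin k) :
    #{x : Fin (k * m) | (finProdFinEquiv.symm x).1 = c} = m := by
  rw [← Fintype.card_subtype, Fintype.card_congr ((finProdFinEquiv.symm.subtypeEquiv
    fun _ ↦ Iff.rfl).trans (Equiv.prodSubtypeFstEquivSubtypeProd (p := (· = c))))]
  simp

theorem exists_highly_connected_small_chromatic_graph_with_extension_property_general
    (k s : ℕ) (hk : 2 ≤ k) :
    ∃ (n : ℕ) (H : SimpleGraph (Fin n)),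
      H.chromaticNumber ≤ k ∧ HasExtensionProperty H k ∧ IsSConnected H s := by
  have : Nontrivial (Fin k) := Fin.nontrivial_iff_two_le.mpr hk
  obtain ⟨m, hm⟩ := (eventually_exists_hasPartiteExtensionProperty (Fin k) k s).exists
  let π : Fin (k * m) → Fin k := fun x ↦ (finProdFinEquiv.symm x).1
  obtain ⟨f, hf⟩ := hm π card_filter_fst_finProdFinEquiv_symm_eq
  refine ⟨k * m, partiteGraph π f, ?_, ?_, hf.isSConnected hk⟩
  · simpa using partiteGraph_chromaticNumber_le π f
  · simpa using hf.hasExtensionProperty (by simp)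

theorem exists_highly_connected_small_chromatic_graph_with_extension_property
    (k s : ℕ) (hk : 2 ≤ k) (hs : 1 ≤ s) :
    ∃ (n : ℕ) (H : SimpleGraph (Fin n)),
      H.chromaticNumber ≤ k ∧ HasExtensionProperty H k ∧ IsSConnected H s :=
  exists_highly_connected_small_chromatic_graph_with_extension_property_general k s hk
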